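/- Let y ∈ ℝⁿ, X ∈ ℝ^{n×p}, k ∈ {0,1,…,p} and τ > λ > 0, and let U_k^λ = {Δ ∈ ℝ^{n×p} : Δ has at most k nonzero columns and ‖Δᵢ‖₂ ≤ λ for all i}. Then the problem min over β of (min over Δ ∈ U_k^λ of ‖y − (X + Δ)β‖₂) + τ‖β‖₁ has the same optimal value and the same set of optimal solutions as the constrained problem: minimize ‖y − Xβ‖₂ + (τ − λ)‖β‖₁ + λ T_k(β) over β ∈ ℝ^p subject to λ Σ_{i=1}^k |β_(i)| ≤ ‖y − Xβ‖₂. -/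

import Mathlib

/-!
Fix `β` and write `r = y - Xβ` and `S = ∑_{i ≤ k} |β_(i)|`. A perturbation `Δ ∈ U_k^λ` has at
most `k` nonzero columns of norm `≤ λ`, so `‖Δβ‖₂ ≤ λ S`; conversely, placing
`sign(βᵢ) · min(‖r‖, λS) / S · r / ‖r‖` in the columns of the `k` largest `|βᵢ|` moves `Xβ`
exactly `min(‖r‖, λS)` towards `y`. Hence the inner minimum is `max(‖r‖ - λS, 0)`, and since
`‖β‖₁ = S + T_k(β)` the min-min objective equals the constrained objective wherever
`λS ≤ ‖r‖`. An infeasible `β` is never optimal: by the intermediate value theorem some `aβ` with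
`0 ≤ a < 1` lies on the boundary `λS = ‖r‖`, where the objective is `τ a ‖β‖₁ < τ ‖β‖₁`.
-/

open Finset

/-- Absolute values of the entries of `β`, sorted in increasing order. -/
noncomputable def sortAbs {p : ℕ} (β : Fin p → ℝ) : Fin p → ℝ :=
  fun i => |β (Tuple.sort (fun j => |β j|) i)|

/-- `∑_{i=1}^k |β_(i)|`: the sum of the `k` largest absolute values of entries of `β`. -/
noncomputable def topSum {p : ℕ} (k : ℕ) (β : Fin p → ℝ) : ℝ :=
  ∑ i ∈ Finset.univ.filter (fun i : Fin p => p - k ≤ (i : ℕ)), sortAbs β i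

/-- The trimmed Lasso penalty `T_k(β)`: sum of the `p - k` smallest `|β_i|`. -/
noncomputable def trimmedLasso {p : ℕ} (k : ℕ) (β : Fin p → ℝ) : ℝ :=
  ∑ i ∈ Finset.univ.filter (fun i : Fin p => (i : ℕ) < p - k), sortAbs β i

/-- `‖β‖₁`: the ℓ₁ norm. -/
noncomputable def l1 {p : ℕ} (β : Fin p → ℝ) : ℝ := ∑ i, |β i|

/-- The Euclidean norm of a vector. -/
noncomputable def norm2 {m : ℕ} (v : Fin m → ℝ) : ℝ := Real.sqrt (∑ i, v i ^ 2)

/-- The uncertainty set `U_k^λ`: matrices with at most `k` nonzero columns, each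
column of Euclidean norm at most `λ`. -/
noncomputable def kColBound {n p : ℕ} (k : ℕ) (lam : ℝ) : Set (Matrix (Fin n) (Fin p) ℝ) :=
  {Δ | (Finset.univ.filter (fun i : Fin p => ∃ j, Δ j i ≠ 0)).card ≤ k ∧
    ∀ i : Fin p, norm2 (fun j => Δ j i) ≤ lam}

/-- The min-min robust objective with `r = τ‖·‖₁`:
`β ↦ (min_{Δ ∈ U_k^λ} ‖y - (X+Δ)β‖₂) + τ‖β‖₁`. -/
noncomputable def minminObj {n p : ℕ} (y : Fin n → ℝ) (X : Matrix (Fin n) (Fin p) ℝ)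
    (k : ℕ) (lam τ : ℝ) (β : Fin p → ℝ) : ℝ :=
  sInf {v : ℝ | ∃ Δ ∈ kColBound (n := n) (p := p) k lam,
    v = norm2 (y - (X + Δ).mulVec β)} + τ * l1 β

open Matrix

section Dominated

open Set

variable {α : Type*} {g h : α → ℝ} {C : Set α}

theorem csInf_range_eq_csInf_image_of_eqOn_of_dominated (hbdd : BddBelow (range g))
    (hC : C.Nonempty) (heq : EqOn g h C) (hdom : ∀ x ∉ C, ∃ x' ∈ C, g x' < g x) :
    sInf (range g) = sInf (h '' C) := by
  rw [← heq.image_eq]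
  have hbddC : BddBelow (g '' C) := hbdd.mono (image_subset_range g C)
  refine le_antisymm (csInf_le_csInf hbdd (hC.image g) (image_subset_range g C)) ?_
  obtain ⟨x₀, -⟩ := hC
  refine le_csInf ⟨g x₀, x₀, rfl⟩ ?_
  rintro _ ⟨x, rfl⟩
  by_cases hx : x ∈ C
  · exact csInf_le hbddC (mem_image_of_mem g hx)
  · obtain ⟨x', hx', hlt⟩ := hdom x hx
    exact (csInf_le hbddC (mem_image_of_mem g hx')).trans hlt.le

theorem setOf_forall_le_eq_of_eqOn_of_dominated (heq : EqOn g h C)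
    (hdom : ∀ x ∉ C, ∃ x' ∈ C, g x' < g x) :
    {x | ∀ x', g x ≤ g x'} = {x | x ∈ C ∧ ∀ x' ∈ C, h x ≤ h x'} := by
  ext x
  constructor
  · intro hx
    have hxC : x ∈ C := by
      by_contra hxC
      obtain ⟨x', -, hlt⟩ := hdom x hxC
      exact (hx x').not_gt hlt
    exact ⟨hxC, fun x' hx' => heq hxC ▸ heq hx' ▸ hx x'⟩
  · rintro ⟨hxC, hx⟩ x'
    by_cases hx' : x' ∈ C
    · exact heq hxC ▸ heq hx' ▸ hx x' hx'
    · obtain ⟨x'', hx'', hlt⟩ := hdom x' hx'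
      exact (heq hxC ▸ heq hx'' ▸ hx x'' hx'').trans hlt.le

end Dominated

theorem Finset.sum_le_sum_of_card_le_of_forall_le {ι : Type*} [DecidableEq ι] {s t : Finset ι}
    {f : ι → ℝ} (hcard : #s ≤ #t) (hnonneg : ∀ b ∈ t \ s, 0 ≤ f b)
    (hle : ∀ a ∈ s \ t, ∀ b ∈ t \ s, f a ≤ f b) : ∑ i ∈ s, f i ≤ ∑ i ∈ t, f i := by
  have hcard' : #(s \ t) ≤ #(t \ s) := by
    have := card_sdiff_add_card_inter s t
    have := card_sdiff_add_card_inter t s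
    rw [inter_comm] at this
    omega
  have hdiff : ∑ i ∈ s \ t, f i ≤ ∑ i ∈ t \ s, f i := by
    rcases (t \ s).eq_empty_or_nonempty with hts | hts
    · rw [hts, card_empty, Nat.le_zero, card_eq_zero] at hcard'
      rw [hts, hcard']
    obtain ⟨b₀, hb₀, hmin⟩ := (t \ s).exists_min_image f hts
    calc ∑ i ∈ s \ t, f i ≤ #(s \ t) • f b₀ := sum_le_card_nsmul _ _ _ fun a ha => hle a ha b₀ hb₀
      _ ≤ #(t \ s) • f b₀ := nsmul_le_nsmul_left (hnonneg b₀ hb₀) hcard'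
      _ ≤ ∑ i ∈ t \ s, f i := card_nsmul_le_sum _ _ _ hmin
  rw [← sum_inter_add_sum_sdiff s t, ← sum_inter_add_sum_sdiff t s, inter_comm]
  linarith

section Norm2

variable {m : ℕ}

theorem norm2_eq_norm_toLp (v : Fin m → ℝ) : norm2 v = ‖WithLp.toLp 2 v‖ := by
  simp [EuclideanSpace.norm_eq, norm2]

theorem norm2_nonneg (v : Fin m → ℝ) : 0 ≤ norm2 v := Real.sqrt_nonneg _

theorem norm2_smul (c : ℝ) (v : Fin m → ℝ) : norm2 (c • v) = |c| * norm2 v := by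
  simp only [norm2_eq_norm_toLp, WithLp.toLp_smul, norm_smul, Real.norm_eq_abs]

theorem norm2_sum_le {ι : Type*} (s : Finset ι) (f : ι → Fin m → ℝ) :
    norm2 (∑ i ∈ s, f i) ≤ ∑ i ∈ s, norm2 (f i) := by
  simpa only [norm2_eq_norm_toLp, WithLp.toLp_sum] using norm_sum_le _ _

theorem norm2_sub_norm2_le (v w : Fin m → ℝ) : norm2 v - norm2 w ≤ norm2 (v - w) := by
  simpa only [norm2_eq_norm_toLp, WithLp.toLp_sub] using norm_sub_norm_le _ _

@[fun_prop]
theorem continuous_norm2 : Continuous (norm2 : (Fin m → ℝ) → ℝ) :=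
  (continuous_norm.comp (PiLp.continuous_toLp 2 _)).congr fun v => (norm2_eq_norm_toLp v).symm

end Norm2

section SortedAbs

variable {p : ℕ} (k : ℕ) (β : Fin p → ℝ)

theorem sortAbs_nonneg (i : Fin p) : 0 ≤ sortAbs β i := abs_nonneg _

theorem monotone_sortAbs : Monotone (sortAbs β) := Tuple.monotone_sort fun j => |β j|

theorem topSum_nonneg : 0 ≤ topSum k β := sum_nonneg fun i _ => sortAbs_nonneg β i

theorem trimmedLasso_nonneg : 0 ≤ trimmedLasso k β := sum_nonneg fun i _ => sortAbs_nonneg β i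

theorem l1_nonneg : 0 ≤ l1 β := sum_nonneg fun _ _ => abs_nonneg _

theorem sum_sortAbs_eq_sum_abs_map (s : Finset (Fin p)) :
    ∑ i ∈ s, sortAbs β i = ∑ j ∈ s.map (Tuple.sort fun j => |β j|).toEmbedding, |β j| :=
  (sum_map s (Tuple.sort fun j => |β j|).toEmbedding fun j => |β j|).symm

theorem l1_eq_topSum_add_trimmedLasso : l1 β = topSum k β + trimmedLasso k β := by
  rw [l1, ← map_univ_equiv (Tuple.sort fun j => |β j|), ← sum_sortAbs_eq_sum_abs_map,
    ← sum_filter_add_sum_filter_not univ fun i : Fin p => (i : ℕ) < p - k]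
  simp only [not_lt, topSum, trimmedLasso, add_comm]

theorem topSum_le_l1 : topSum k β ≤ l1 β := by
  linarith [l1_eq_topSum_add_trimmedLasso k β, trimmedLasso_nonneg k β]

theorem topSum_zero : topSum k (0 : Fin p → ℝ) = 0 := by
  simp [topSum, sortAbs]

theorem sortAbs_smul {a : ℝ} (ha : 0 ≤ a) : sortAbs (a • β) = a • sortAbs β := by
  have hσ : (fun j => |(a • β) j|) ∘ Tuple.sort (fun j => |β j|) = a • sortAbs β := by
    ext i
    simp [sortAbs, abs_mul, abs_of_nonneg ha]
  have hmono : Monotone ((fun j => |(a • β) j|) ∘ Tuple.sort (fun j => |β j|)) :=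
    hσ ▸ (monotone_sortAbs β).const_smul ha
  exact hσ ▸ (Tuple.unique_monotone hmono (Tuple.monotone_sort _)).symm

theorem topSum_smul {a : ℝ} (ha : 0 ≤ a) : topSum k (a • β) = a * topSum k β := by
  simp [topSum, sortAbs_smul β ha, mul_sum]

theorem l1_smul {a : ℝ} (ha : 0 ≤ a) : l1 (a • β) = a * l1 β := by
  simp [l1, abs_mul, abs_of_nonneg ha, mul_sum]

variable {k}

theorem card_filter_sub_le_val (hk : k ≤ p) : #{i : Fin p | p - k ≤ (i : ℕ)} = k := by
  have := card_filter_add_card_filter_not (s := univ) fun i : Fin p => (i : ℕ) < p - k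
  simp only [not_lt, Fin.card_filter_val_lt, card_univ, Fintype.card_fin] at this
  omega

theorem exists_card_eq_sum_abs_eq_topSum (hk : k ≤ p) :
    ∃ I : Finset (Fin p), #I = k ∧ ∑ j ∈ I, |β j| = topSum k β :=
  ⟨_, by rw [card_map, card_filter_sub_le_val hk], (sum_sortAbs_eq_sum_abs_map β _).symm⟩

theorem sum_abs_le_topSum (hk : k ≤ p) {J : Finset (Fin p)} (hJ : #J ≤ k) :
    ∑ j ∈ J, |β j| ≤ topSum k β := by
  set σ := Tuple.sort fun j => |β j|
  have hJ' : J = (J.map σ.symm.toEmbedding).map σ.toEmbedding := by simp [Finset.map_map]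
  rw [hJ', ← sum_sortAbs_eq_sum_abs_map, topSum]
  refine sum_le_sum_of_card_le_of_forall_le ?_ (fun i _ => sortAbs_nonneg β i) ?_
  · rwa [card_map, card_filter_sub_le_val hk]
  · intro a ha b hb
    simp only [mem_sdiff, mem_filter, mem_univ, true_and] at ha hb
    exact monotone_sortAbs β (Fin.le_def.2 (by omega))

end SortedAbs

section RobustResidual

variable {n p : ℕ} {k : ℕ} {lam : ℝ}

theorem mulVec_eq_sum_smul_col (Δ : Matrix (Fin n) (Fin p) ℝ) (β : Fin p → ℝ) :
    Δ *ᵥ β = ∑ i, β i • fun j => Δ j i := by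
  ext j
  simp [mulVec, dotProduct, Finset.sum_apply, mul_comm]

theorem norm2_mulVec_le_of_mem_kColBound (hk : k ≤ p) (hlam : 0 ≤ lam)
    {Δ : Matrix (Fin n) (Fin p) ℝ} (hΔ : Δ ∈ kColBound k lam) (β : Fin p → ℝ) :
    norm2 (Δ *ᵥ β) ≤ lam * topSum k β := by
  obtain ⟨hcard, hcol⟩ := hΔ
  set s : Finset (Fin p) := {i | ∃ j, Δ j i ≠ 0}
  have hsupp : Δ *ᵥ β = ∑ i ∈ s, β i • fun j => Δ j i := by
    rw [mulVec_eq_sum_smul_col, ← sum_filter_add_sum_filter_not univ fun i => ∃ j, Δ j i ≠ 0]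
    refine add_eq_left.2 (sum_eq_zero fun i hi => ?_)
    simp only [mem_filter, mem_univ, true_and, not_exists, not_not] at hi
    ext j
    simp [hi j]
  calc norm2 (Δ *ᵥ β) ≤ ∑ i ∈ s, |β i| * norm2 (fun j => Δ j i) := by
        simpa only [hsupp, norm2_smul] using norm2_sum_le s fun i => β i • fun j => Δ j i
    _ ≤ ∑ i ∈ s, |β i| * lam :=
        sum_le_sum fun i _ => mul_le_mul_of_nonneg_left (hcol i) (abs_nonneg _)
    _ = lam * ∑ i ∈ s, |β i| := by rw [mul_sum]; simp only [mul_comm]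
    _ ≤ lam * topSum k β := mul_le_mul_of_nonneg_left (sum_abs_le_topSum β hk hcard) hlam

theorem vecMulVec_mem_kColBound {u : Fin n → ℝ} {v : Fin p → ℝ} (hv : #{i | v i ≠ 0} ≤ k)
    (hu : ∀ i, |v i| * norm2 u ≤ lam) : vecMulVec u v ∈ kColBound k lam := by
  refine ⟨le_trans (card_le_card fun i hi => ?_) hv, fun i => ?_⟩
  · obtain ⟨j, hj⟩ := (mem_filter.1 hi).2
    exact mem_filter.2 ⟨mem_univ i, right_ne_zero_of_mul hj⟩
  · have : (fun j => vecMulVec u v j i) = v i • u := by ext j; simp [vecMulVec_apply, mul_comm]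
    rw [this, norm2_smul]
    exact hu i

theorem zero_mem_kColBound (hlam : 0 ≤ lam) : (0 : Matrix (Fin n) (Fin p) ℝ) ∈ kColBound k lam :=
  ⟨by simp, fun _ => by simpa [norm2] using hlam⟩

variable (y : Fin n → ℝ) (X : Matrix (Fin n) (Fin p) ℝ) (β : Fin p → ℝ)

theorem max_sub_le_norm2_residual (hk : k ≤ p) (hlam : 0 ≤ lam)
    {Δ : Matrix (Fin n) (Fin p) ℝ} (hΔ : Δ ∈ kColBound k lam) :
    max (norm2 (y - X *ᵥ β) - lam * topSum k β) 0 ≤ norm2 (y - (X + Δ) *ᵥ β) := by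
  have hres : y - (X + Δ) *ᵥ β = (y - X *ᵥ β) - Δ *ᵥ β := by rw [add_mulVec]; abel
  refine max_le ?_ (norm2_nonneg _)
  calc norm2 (y - X *ᵥ β) - lam * topSum k β ≤ norm2 (y - X *ᵥ β) - norm2 (Δ *ᵥ β) := by
        linarith [norm2_mulVec_le_of_mem_kColBound hk hlam hΔ β]
    _ ≤ norm2 (y - (X + Δ) *ᵥ β) := hres ▸ norm2_sub_norm2_le _ _

theorem exists_mem_kColBound_norm2_residual_eq_of_pos (hk : k ≤ p) (hlam : 0 ≤ lam)
    (hr : 0 < norm2 (y - X *ᵥ β)) (hS : 0 < topSum k β) :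
    ∃ Δ ∈ kColBound k lam,
      norm2 (y - (X + Δ) *ᵥ β) = max (norm2 (y - X *ᵥ β) - lam * topSum k β) 0 := by
  obtain ⟨I, hIk, hIS⟩ := exists_card_eq_sum_abs_eq_topSum β hk
  set r := y - X *ᵥ β
  set S := topSum k β
  set c := min (norm2 r) (lam * S)
  have hc : 0 ≤ c := le_min (norm2_nonneg r) (mul_nonneg hlam hS.le)
  set v : Fin p → ℝ := fun i => if i ∈ I then (SignType.sign (β i) : ℝ) else 0
  have hvβ : v ⬝ᵥ β = S := by
    simp only [v, dotProduct, ite_mul, zero_mul, sign_mul_self, sum_ite_mem, univ_inter, hIS]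
  refine ⟨vecMulVec ((c / (S * norm2 r)) • r) v, vecMulVec_mem_kColBound ?_ fun i => ?_, ?_⟩
  · refine (card_le_card fun i hi => ?_).trans hIk.le
    by_contra hiI
    exact (mem_filter.1 hi).2 (by simp [v, hiI])
  · have hvi : |v i| ≤ 1 := by
      by_cases hi : i ∈ I
      · rcases lt_trichotomy (β i) 0 with h | h | h <;> simp [v, hi, h]
      · simp [v, hi]
    have hcS : c / S ≤ lam := (div_le_iff₀ hS).2 (min_le_right _ _)
    calc |v i| * norm2 ((c / (S * norm2 r)) • r) = |v i| * (c / S) := by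
          rw [norm2_smul, abs_of_nonneg (div_nonneg hc (mul_pos hS hr).le)]
          field_simp
      _ ≤ lam := by nlinarith [abs_nonneg (v i), div_nonneg hc hS.le]
  · have hres :
        y - (X + vecMulVec ((c / (S * norm2 r)) • r) v) *ᵥ β = (1 - c / norm2 r) • r := by
      have hSc : S * (c / (S * norm2 r)) = c / norm2 r := by field_simp
      rw [add_mulVec, vecMulVec_mulVec, hvβ, op_smul_eq_smul, smul_smul, hSc, sub_smul, one_smul,
        ← sub_sub]
    have hcr : c / norm2 r ≤ 1 := (div_le_one hr).2 (min_le_left _ _)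
    rw [hres, norm2_smul, abs_of_nonneg (sub_nonneg.2 hcr), sub_mul, one_mul,
      div_mul_cancel₀ _ hr.ne']
    rcases le_total (norm2 r) (lam * S) with h | h <;> simp [c, h]

theorem exists_mem_kColBound_norm2_residual_eq (hk : k ≤ p) (hlam : 0 ≤ lam) :
    ∃ Δ ∈ kColBound k lam,
      norm2 (y - (X + Δ) *ᵥ β) = max (norm2 (y - X *ᵥ β) - lam * topSum k β) 0 := by
  rcases (norm2_nonneg (y - X *ᵥ β)).eq_or_lt with hr | hr
  · refine ⟨0, zero_mem_kColBound hlam, ?_⟩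
    rw [add_zero, ← hr, zero_sub, max_eq_right (neg_nonpos.2 (mul_nonneg hlam (topSum_nonneg k β)))]
  rcases (topSum_nonneg k β).eq_or_lt with hS | hS
  · refine ⟨0, zero_mem_kColBound hlam, ?_⟩
    rw [add_zero, ← hS, mul_zero, sub_zero, max_eq_left (norm2_nonneg _)]
  exact exists_mem_kColBound_norm2_residual_eq_of_pos y X β hk hlam hr hS

theorem isLeast_norm2_residual (hk : k ≤ p) (hlam : 0 ≤ lam) :
    IsLeast {v | ∃ Δ ∈ kColBound k lam, v = norm2 (y - (X + Δ) *ᵥ β)}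
      (max (norm2 (y - X *ᵥ β) - lam * topSum k β) 0) := by
  obtain ⟨Δ, hΔ, hval⟩ := exists_mem_kColBound_norm2_residual_eq y X β hk hlam
  refine ⟨⟨Δ, hΔ, hval.symm⟩, ?_⟩
  rintro _ ⟨Δ', hΔ', rfl⟩
  exact max_sub_le_norm2_residual y X β hk hlam hΔ'

end RobustResidual

section MinMin

variable {n p : ℕ} {k : ℕ} {lam τ : ℝ} (y : Fin n → ℝ) (X : Matrix (Fin n) (Fin p) ℝ)
  (β : Fin p → ℝ)

theorem minminObj_eq (hk : k ≤ p) (hlam : 0 ≤ lam) :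
    minminObj y X k lam τ β = max (norm2 (y - X *ᵥ β) - lam * topSum k β) 0 + τ * l1 β := by
  rw [minminObj, (isLeast_norm2_residual y X β hk hlam).csInf_eq]

theorem minminObj_nonneg (hk : k ≤ p) (hlam : 0 ≤ lam) (hτ : 0 ≤ τ) :
    0 ≤ minminObj y X k lam τ β := by
  rw [minminObj_eq y X β hk hlam]
  exact add_nonneg (le_max_right _ _) (mul_nonneg hτ (l1_nonneg β))

theorem minminObj_eq_of_le (hk : k ≤ p) (hlam : 0 ≤ lam)
    (hβ : lam * topSum k β ≤ norm2 (y - X *ᵥ β)) :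
    minminObj y X k lam τ β =
      norm2 (y - X *ᵥ β) + (τ - lam) * l1 β + lam * trimmedLasso k β := by
  rw [minminObj_eq y X β hk hlam, max_eq_left (sub_nonneg.2 hβ),
    l1_eq_topSum_add_trimmedLasso k β]
  ring

theorem exists_smul_norm2_residual_eq (hβ : norm2 (y - X *ᵥ β) < lam * topSum k β) :
    ∃ a ∈ Set.Ico (0 : ℝ) 1, norm2 (y - X *ᵥ (a • β)) = lam * topSum k (a • β) := by
  set F : ℝ → ℝ := fun a => norm2 (y - a • (X *ᵥ β)) - lam * (a * topSum k β)
  have hF : Continuous F := by simp only [F]; fun_prop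
  have hF0 : 0 ≤ F 0 := by simp [F, norm2_nonneg]
  have hF1 : F 1 < 0 := by simp [F, hβ]
  obtain ⟨a, ⟨ha0, ha1⟩, hFa⟩ :=
    intermediate_value_Icc' zero_le_one hF.continuousOn ⟨hF1.le, hF0⟩
  refine ⟨a, ⟨ha0, ha1.lt_of_ne ?_⟩, ?_⟩
  · rintro rfl
    exact hF1.ne hFa
  · rw [mulVec_smul, topSum_smul k β ha0]
    simp only [F] at hFa
    linarith

theorem exists_le_minminObj_lt (hk : k ≤ p) (hlam : 0 ≤ lam) (hτ : 0 < τ)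
    (hβ : norm2 (y - X *ᵥ β) < lam * topSum k β) :
    ∃ β', lam * topSum k β' ≤ norm2 (y - X *ᵥ β') ∧
      minminObj y X k lam τ β' < minminObj y X k lam τ β := by
  obtain ⟨a, ⟨ha0, ha1⟩, hbdry⟩ := exists_smul_norm2_residual_eq y X β hβ
  have hS : 0 < topSum k β := pos_of_mul_pos_right ((norm2_nonneg _).trans_lt hβ) hlam
  have hl1 : 0 < l1 β := hS.trans_le (topSum_le_l1 k β)
  refine ⟨a • β, hbdry.ge, ?_⟩
  rw [minminObj_eq y X _ hk hlam, minminObj_eq y X _ hk hlam, hbdry, sub_self,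
    max_eq_right (sub_nonpos.2 hβ.le), l1_smul β ha0, max_self, zero_add, zero_add]
  nlinarith [mul_pos hτ hl1]

end MinMin

/-- Corollary 3.1: for `τ > λ > 0`, the min-min robust problem
with penalty `τ‖β‖₁` has the same optimal value and the same set of optimal
solutions as the constrained trimmed Lasso problem
`min ‖y - Xβ‖₂ + (τ-λ)‖β‖₁ + λT_k(β)  s.t.  λ∑_{i=1}^k |β_(i)| ≤ ‖y - Xβ‖₂`. -/
theorem minmin_robust_as_constrained_trimmedLasso {n p : ℕ} (y : Fin n → ℝ)
    (X : Matrix (Fin n) (Fin p) ℝ) (k : ℕ) (hk : k ≤ p)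
    (τ lam : ℝ) (hlam : 0 < lam) (hτ : lam < τ) :
    sInf {v : ℝ | ∃ β : Fin p → ℝ, v = minminObj y X k lam τ β} =
      sInf {v : ℝ | ∃ β : Fin p → ℝ,
        lam * topSum k β ≤ norm2 (y - X.mulVec β) ∧
        v = norm2 (y - X.mulVec β) + (τ - lam) * l1 β + lam * trimmedLasso k β} ∧
    {β : Fin p → ℝ | ∀ β' : Fin p → ℝ,
        minminObj y X k lam τ β ≤ minminObj y X k lam τ β'} =
      {β : Fin p → ℝ | lam * topSum k β ≤ norm2 (y - X.mulVec β) ∧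
        ∀ β' : Fin p → ℝ, lam * topSum k β' ≤ norm2 (y - X.mulVec β') →
          norm2 (y - X.mulVec β) + (τ - lam) * l1 β + lam * trimmedLasso k β ≤
            norm2 (y - X.mulVec β') + (τ - lam) * l1 β' + lam * trimmedLasso k β'} := by
  set C := {β : Fin p → ℝ | lam * topSum k β ≤ norm2 (y - X *ᵥ β)}
  have heq : Set.EqOn (minminObj y X k lam τ)
      (fun β => norm2 (y - X *ᵥ β) + (τ - lam) * l1 β + lam * trimmedLasso k β) C :=
    fun β hβ => minminObj_eq_of_le y X β hk hlam.le hβ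
  have hdom : ∀ β ∉ C, ∃ β' ∈ C, minminObj y X k lam τ β' < minminObj y X k lam τ β :=
    fun β hβ => exists_le_minminObj_lt y X β hk hlam.le (hlam.trans hτ) (not_le.1 hβ)
  have hbdd : BddBelow (Set.range (minminObj y X k lam τ)) :=
    ⟨0, Set.forall_mem_range.2 fun β => minminObj_nonneg y X β hk hlam.le (hlam.trans hτ).le⟩
  have hC : C.Nonempty := ⟨0, by simp [C, topSum_zero, norm2_nonneg]⟩
  refine ⟨?_, setOf_forall_le_eq_of_eqOn_of_dominated heq hdom⟩
  convert csInf_range_eq_csInf_image_of_eqOn_of_dominated hbdd hC heq hdom using 2 <;> ext <;>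
    simp [C, eq_comm]
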